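/- For every probability distribution p = (p_k) on ℕ with p_k > 0 for all k, every real γ₁ > 0, every s ∈ {2,3,4} and every ℓ ∈ {1,…,s−1}, the complex number γ₁·exp(2πiℓ/s) is NOT an eigenvalue of A: there is no nonzero x ∈ D(A) with A x = γ₁·exp(2πiℓ/s)·x. -/

import Mathlib

/-!
Write `S l = ∑_{k ≥ l} p k * x k`. The eigenvalue equation `A x = μ x` says `S l = μ q_l x l`,
hence `S (l + 1) = (μ q_l - p l) x l`. When `re μ ≤ 0`, subtracting the positive number `p l`
from `μ q_l` cannot decrease its modulus, so `‖S l‖` is nondecreasing; since `S l → 0`, `S`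
vanishes identically, and then `p l * x l = S l - S (l + 1) = 0`. For `s ∈ {2, 3, 4}` and
`1 ≤ ℓ < s` the angle `2πℓ/s` lies in `[π/2, 3π/2]`, so `μ = γ₁ exp (2πiℓ/s)` has `re μ ≤ 0`.
-/

open scoped BigOperators

noncomputable section

/-- Tail sum `q_l = Σ_{k ≥ l} p_k`. -/
def qtail (p : ℕ → ℝ) (l : ℕ) : ℝ := ∑' k, p (l + k)

/-- The operator `A` on complex sequences: `(A v)(l) = (1/q_l) Σ_{k=l}^∞ p_k v(k)`. -/
def opA (p : ℕ → ℝ) (v : ℕ → ℂ) : ℕ → ℂ :=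
  fun l => (1 / (qtail p l : ℂ)) * ∑' k, (p (l + k) : ℂ) * v (l + k)

/-- Membership in the domain `D(A) = {v : Σ_k p_k |v(k)| < ∞}`. -/
def memDA (p : ℕ → ℝ) (v : ℕ → ℂ) : Prop :=
  Summable fun k => p k * ‖v k‖

open Filter Topology Complex

lemma norm_le_norm_sub_ofReal_of_re_nonpos {z : ℂ} (hz : z.re ≤ 0) {r : ℝ} (hr : 0 ≤ r) :
    ‖z‖ ≤ ‖z - r‖ := by
  rw [← sq_le_sq₀ (norm_nonneg _) (norm_nonneg _), Complex.sq_norm, Complex.sq_norm, normSq_apply,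
    normSq_apply]
  simp only [sub_re, ofReal_re, sub_im, ofReal_im, sub_zero]
  nlinarith

lemma re_ofReal_mul_exp_two_pi_I_div_nonpos {γ ℓ s : ℝ} (hγ : 0 ≤ γ) (hs : 0 < s)
    (h₁ : s ≤ 4 * ℓ) (h₂ : 4 * ℓ ≤ 3 * s) :
    ((γ : ℂ) * exp (2 * Real.pi * I * ℓ / s)).re ≤ 0 := by
  have hθ : 2 * Real.pi * I * ℓ / s = ((2 * Real.pi * ℓ / s : ℝ) : ℂ) * I := by push_cast; ring
  rw [hθ, re_ofReal_mul, exp_ofReal_mul_I_re]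
  refine mul_nonpos_of_nonneg_of_nonpos hγ (Real.cos_nonpos_of_pi_div_two_le_of_le ?_ ?_)
  · rw [le_div_iff₀ hs]; nlinarith [Real.pi_pos]
  · rw [div_le_iff₀ hs]; nlinarith [Real.pi_pos]

section Tail

variable {E : Type*} [AddCommGroup E] [TopologicalSpace E] [IsTopologicalAddGroup E] [T2Space E]

lemma Summable.tsum_nat_add_left_eq_add {f : ℕ → E} (hf : Summable f) (l : ℕ) :
    ∑' k, f (l + k) = f l + ∑' k, f (l + 1 + k) := by
  have hl : Summable fun k => f (l + k) := by
    simpa only [add_comm] using (summable_nat_add_iff l).2 hf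
  rw [hl.tsum_eq_zero_add]
  simp only [add_zero, add_assoc, add_comm 1]

lemma tendsto_tsum_nat_add_left (f : ℕ → E) :
    Tendsto (fun l => ∑' k, f (l + k)) atTop (𝓝 0) := by
  simpa only [add_comm] using tendsto_sum_nat_add f

end Tail

section Operator

variable {p : ℕ → ℝ}

lemma qtail_pos (hp : ∀ k, 0 < p k) (hsp : Summable p) (l : ℕ) : 0 < qtail p l :=
  (hsp.comp_injective (add_right_injective l)).tsum_pos (fun _ => (hp _).le) 0 (hp _)

lemma memDA.summable_ofReal_mul {x : ℕ → ℂ} (hx : memDA p x) (hp : ∀ k, 0 ≤ p k) :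
    Summable fun k => (p k : ℂ) * x k :=
  .of_norm <| hx.congr fun k => by rw [norm_mul, norm_real, Real.norm_of_nonneg (hp k)]

lemma tsum_ofReal_mul_eq_of_opA_eq {x : ℕ → ℂ} {μ : ℂ}
    (hAx : opA p x = fun l => μ * x l) {l : ℕ} (hq : qtail p l ≠ 0) :
    ∑' k, (p (l + k) : ℂ) * x (l + k) = μ * qtail p l * x l := by
  have h := congrFun hAx l
  simp only [opA, one_div] at h
  rw [inv_mul_eq_iff_eq_mul₀ (by exact_mod_cast hq)] at h
  rw [h]; ring

theorem eq_zero_of_opA_eq_const_mul_of_re_nonpos (hp : ∀ k, 0 < p k) (hsp : Summable p)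
    {μ : ℂ} (hμ : μ.re ≤ 0) {x : ℕ → ℂ} (hx : memDA p x) (hAx : opA p x = fun l => μ * x l) :
    x = 0 := by
  set f : ℕ → ℂ := fun k => p k * x k
  have hf : Summable f := hx.summable_ofReal_mul fun k => (hp k).le
  have hS (l : ℕ) : ∑' k, f (l + k) = μ * qtail p l * x l :=
    tsum_ofReal_mul_eq_of_opA_eq hAx (qtail_pos hp hsp l).ne'
  have hS_succ (l : ℕ) : ∑' k, f (l + 1 + k) = (μ * qtail p l - p l) * x l := by
    rw [eq_sub_of_add_eq' (hf.tsum_nat_add_left_eq_add l).symm, hS]; ring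
  have hmono : Monotone fun l => ‖∑' k, f (l + k)‖ := monotone_nat_of_le_succ fun l => by
    rw [hS, hS_succ, norm_mul _ (x l), norm_mul _ (x l)]
    gcongr
    refine norm_le_norm_sub_ofReal_of_re_nonpos ?_ (hp l).le
    rw [re_mul_ofReal]
    exact mul_nonpos_of_nonpos_of_nonneg hμ (qtail_pos hp hsp l).le
  have hS_zero (l : ℕ) : ∑' k, f (l + k) = 0 := by
    have h := hmono.ge_of_tendsto (tendsto_tsum_nat_add_left f).norm l
    rwa [norm_zero, norm_le_zero_iff] at h
  funext l
  have hfl : f l = 0 := by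
    have h := hf.tsum_nat_add_left_eq_add l
    rwa [hS_zero, hS_zero, add_zero, eq_comm] at h
  exact (mul_eq_zero.1 hfl).resolve_left (by exact_mod_cast (hp l).ne')

end Operator

/-- For any probability distribution `p` with positive masses, `γ₁ > 0`, `s ∈ {2,3,4}`
and `ℓ ∈ {1,…,s−1}`, the number `γ₁ exp(2πiℓ/s)` is not an eigenvalue of `A`. -/
theorem not_eigenvalue_s_two_three_four
    (p : ℕ → ℝ) (hp : ∀ k, 0 < p k) (hsum : HasSum p 1)
    (γ₁ : ℝ) (hγ₁ : 0 < γ₁) (s : ℕ) (hs : s = 2 ∨ s = 3 ∨ s = 4)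
    (ℓ : ℕ) (hℓ1 : 1 ≤ ℓ) (hℓs : ℓ ≤ s - 1) :
    ¬ ∃ x : ℕ → ℂ, x ≠ 0 ∧ memDA p x ∧
      opA p x =
        fun l => (γ₁ : ℂ) * Complex.exp (2 * Real.pi * Complex.I * ℓ / s) * x l := by
  rintro ⟨x, hx0, hx, hAx⟩
  have hs₀ : (0 : ℝ) < s := by norm_cast; omega
  have h₁ : (s : ℝ) ≤ 4 * ℓ := by norm_cast; omega
  have h₂ : 4 * (ℓ : ℝ) ≤ 3 * s := by norm_cast; omega
  have hre := re_ofReal_mul_exp_two_pi_I_div_nonpos hγ₁.le hs₀ h₁ h₂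
  push_cast at hre
  exact hx0 (eq_zero_of_opA_eq_const_mul_of_re_nonpos hp hsum.summable hre hx hAx)
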